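/- If m >= n+1 polynomials f_1,...,f_m in n complex variables have all coefficients generic (i.e., the statement holds for all coefficient tuples outside the zero set of some nonzero polynomial in the coefficients), and each f_k is a nonzero polynomial, then the system f_1(x) = ... = f_m(x) = 0 has no solution x with all coordinates nonzero, i.e., no solution in (C \ {0})^n. -/

import Mathlib

/-!
Fix in each `f_k` a pivot monomial `x^(p k)`. At a solution `x` in the torus the pivot
coefficient is determined by the others, `c (k, p k) = -(∑_{d ≠ p k} c (k, d) x^d) / x^(p k)`.
Hence every coefficient vector admitting a torus solution is the image, under a `ℂ`-point,
of one fixed family of elements of the coordinate ring of `ℂ^{free coefficients} × (ℂˣ)^n`.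
That ring has transcendence degree `#coefficients - m + n`, which is smaller than the number
of coefficients because `m > n`; an algebraic relation among the family is the required `Q`.
-/

open Cardinal MvPolynomial Algebra Finset

universe u v

theorem exists_ne_zero_aeval_eq_zero_of_trdeg_lt {R : Type*} {A ι : Type v} [CommRing R]
    [Nontrivial R] [CommRing A] [Algebra R A] (y : ι → A) (h : trdeg R A < #ι) :
    ∃ P : MvPolynomial ι R, P ≠ 0 ∧ aeval y P = 0 := by
  by_contra! hy
  have hind : AlgebraicIndependent R y :=
    algebraicIndependent_iff.2 fun P hP => by_contra fun hP0 => hy P hP0 hP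
  exact h.not_ge hind.cardinalMk_le_trdeg

theorem IsLocalization.trdeg_eq (K : Type*) {R S : Type u} [Field K] [CommRing R] [IsDomain R]
    [Algebra K R] [CommRing S] [Algebra R S] [Algebra K S] [IsScalarTower K R S]
    {M : Submonoid R} (hM : M ≤ nonZeroDivisors R) [IsLocalization M S] :
    trdeg K S = trdeg K R := by
  have : IsDomain S := IsLocalization.isDomain_of_le_nonZeroDivisors S hM
  have : FaithfulSMul R S :=
    (faithfulSMul_iff_algebraMap_injective R S).2 (IsLocalization.injective S hM)
  have : Algebra.IsAlgebraic R S := IsLocalization.isAlgebraic S M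
  rw [← trdeg_add_eq (R := K) (S := R) (A := S), trdeg_eq_zero (R := R), add_zero]

namespace SparseSystem

variable {n m : ℕ} (S : Fin m → Finset (Fin n →₀ ℕ)) (p : Fin m → Fin n →₀ ℕ)

abbrev FreeCoeff : Type := (k : Fin m) × (S k).erase (p k)

abbrev ParamRing : Type := MvPolynomial (FreeCoeff S p ⊕ Fin n) ℂ

noncomputable def coordProd : ParamRing S p := ∏ j, X (Sum.inr j)

abbrev TorusRing : Type := Localization.Away (coordProd S p)

theorem isUnit_coord (j : Fin n) :
    IsUnit (algebraMap (ParamRing S p) (TorusRing S p) (X (Sum.inr j))) :=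
  isUnit_of_dvd_unit (map_dvd _ (dvd_prod_of_mem (fun j => X (Sum.inr j)) (mem_univ j)))
    (IsLocalization.Away.algebraMap_isUnit (coordProd S p))

noncomputable def monomialUnit (d : Fin n →₀ ℕ) : (TorusRing S p)ˣ :=
  ∏ j, (isUnit_coord S p j).unit ^ d j

noncomputable def pivotNumerator (k : Fin m) : ParamRing S p :=
  ∑ d : (S k).erase (p k), X (Sum.inl ⟨k, d⟩) * ∏ j, X (Sum.inr j) ^ (d : Fin n →₀ ℕ) j

noncomputable def coeffParam (i : (k : Fin m) × S k) : TorusRing S p :=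
  if h : (i.2 : Fin n →₀ ℕ) = p i.1 then
    -algebraMap _ _ (pivotNumerator S p i.1) * ↑(monomialUnit S p (p i.1))⁻¹
  else
    algebraMap (ParamRing S p) _
      (X (Sum.inl (⟨i.1, i.2, mem_erase.2 ⟨h, i.2.2⟩⟩ : FreeCoeff S p)))

theorem trdeg_torusRing : trdeg ℂ (TorusRing S p) = Fintype.card (FreeCoeff S p) + n := by
  have hM : Submonoid.powers (coordProd S p) ≤ nonZeroDivisors (ParamRing S p) :=
    powers_le_nonZeroDivisors_of_noZeroDivisors (prod_ne_zero_iff.2 fun j _ => X_ne_zero _)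
  rw [IsLocalization.trdeg_eq ℂ hM, MvPolynomial.trdeg_of_isDomain]
  simp

variable {p}

theorem card_freeCoeff_add (hp : ∀ k, p k ∈ S k) :
    Fintype.card (FreeCoeff S p) + m = Fintype.card ((k : Fin m) × S k) := by
  simp only [Fintype.card_sigma, Fintype.card_coe]
  calc ∑ k, ((S k).erase (p k)).card + m = ∑ k, (((S k).erase (p k)).card + 1) := by
        rw [Finset.sum_add_distrib, Finset.sum_const, card_univ, Fintype.card_fin,
          smul_eq_mul, mul_one]
    _ = ∑ k, (S k).card := sum_congr rfl fun k _ => card_erase_add_one (hp k)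

theorem trdeg_torusRing_lt (hp : ∀ k, p k ∈ S k) (hm : n < m) :
    trdeg ℂ (TorusRing S p) < #((k : Fin m) × S k) := by
  rw [trdeg_torusRing, Cardinal.mk_fintype, ← card_freeCoeff_add S hp]
  exact_mod_cast Nat.add_lt_add_left hm _

variable (p) (c : Fin m × (Fin n →₀ ℕ) → ℂ) {x : Fin n → ℂ} (hx : ∀ j, x j ≠ 0)

noncomputable def evalAt : TorusRing S p →ₐ[ℂ] ℂ :=
  IsLocalization.Away.liftAlgHom (coordProd S p)
    (f := aeval (Sum.elim (fun i : FreeCoeff S p => c (i.1, i.2)) x)) <| by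
      simpa [coordProd] using prod_ne_zero_iff.2 fun j _ => hx j

theorem evalAt_algebraMap (r : ParamRing S p) :
    evalAt S p c hx (algebraMap _ _ r) =
      aeval (Sum.elim (fun i : FreeCoeff S p => c (i.1, i.2)) x) r := by
  simp [evalAt]

theorem evalAt_monomialUnit (d : Fin n →₀ ℕ) :
    evalAt S p c hx (monomialUnit S p d) = ∏ j, x j ^ d j := by
  simp [monomialUnit, evalAt_algebraMap]

theorem evalAt_coeffParam (heq : ∀ k, ∑ d ∈ S k, c (k, d) * ∏ j, x j ^ d j = 0)
    (i : (k : Fin m) × S k) : evalAt S p c hx (coeffParam S p i) = c (i.1, i.2) := by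
  obtain ⟨k, d, hd⟩ := i
  by_cases h : d = p k
  · subst h
    have hsplit := add_sum_erase (S k) (fun d => c (k, d) * ∏ j, x j ^ d j) hd
    have hx0 : ∏ j, x j ^ (p k) j ≠ 0 := prod_ne_zero_iff.2 fun j _ => pow_ne_zero _ (hx j)
    simp only [coeffParam, dif_pos, map_mul, map_neg, evalAt_algebraMap, map_units_inv,
      evalAt_monomialUnit, pivotNumerator, map_sum, map_prod, map_pow, aeval_X, Sum.elim_inl,
      Sum.elim_inr]
    rw [sum_coe_sort (s := (S k).erase (p k)) (f := fun d => c (k, d) * ∏ j, x j ^ d j)]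
    field_simp
    linear_combination -hsplit.trans (heq k)
  · simp [coeffParam, h, evalAt_algebraMap]

end SparseSystem

open SparseSystem

/-- A generic overdetermined polynomial system (`m ≥ n+1` nonzero polynomials in
`n` variables, with generic coefficients on prescribed nonempty monomial
supports) has no solution in `(ℂ \ {0})^n`. -/
theorem stmt_2 (n m : ℕ) (hm : n + 1 ≤ m) (S : Fin m → Finset (Fin n →₀ ℕ))
    (hS : ∀ k, (S k).Nonempty) :
    ∃ Q : MvPolynomial (Fin m × (Fin n →₀ ℕ)) ℂ, Q ≠ 0 ∧
      ∀ c : Fin m × (Fin n →₀ ℕ) → ℂ, MvPolynomial.eval c Q ≠ 0 →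
        ¬ ∃ x : Fin n → ℂ, (∀ j, x j ≠ 0) ∧
          ∀ k, ∑ d ∈ S k, c (k, d) * ∏ j, x j ^ d j = 0 := by
  choose p hp using hS
  obtain ⟨P, hP0, hP⟩ :=
    exists_ne_zero_aeval_eq_zero_of_trdeg_lt (coeffParam S p) (trdeg_torusRing_lt S hp hm)
  have hinj : Function.Injective fun i : (k : Fin m) × S k => (i.1, (i.2 : Fin n →₀ ℕ)) := by
    rintro ⟨k, d, hd⟩ ⟨k', d', hd'⟩ h
    simp only [Prod.mk.injEq] at h
    obtain ⟨rfl, rfl⟩ := h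
    rfl
  refine ⟨rename _ P, (rename_injective _ hinj).ne_iff' (map_zero _) |>.2 hP0, ?_⟩
  rintro c hc ⟨x, hx, heq⟩
  apply hc
  calc eval c (rename _ P) = evalAt S p c hx (aeval (coeffParam S p) P) := by
        rw [eval_rename, comp_aeval_apply, ← aeval_eq_eval]
        exact congrArg (aeval · P) (funext fun i => (evalAt_coeffParam S p c hx heq i).symm)
    _ = 0 := by rw [hP, map_zero]
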